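/- Let α be an action of a countable group Γ by homeomorphisms on a compact Hausdorff 0-dimensional space X. Let H(α) be the quotient of the additive group C(X,ℤ) of continuous (locally constant) functions X → ℤ by the subgroup generated by {f − γ·f : f ∈ C(X,ℤ), γ ∈ Γ}, and let π : T(α) → H(α) be the map sending the class [f] of f ∈ C(X,ℕ) in T(α) to the class of f in H(α) (π is a well-defined monoid homomorphism). Then π is injective if and only if T(α) is cancellative, i.e., a + b = a + c implies b = c for all a, b, c ∈ T(α). -/

import Mathlib

open MeasureTheory Set
open scoped ENNReal

/-! Preliminary definitions: the clopen type semigroup of an action of a group `Γ`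
by homeomorphisms on a topological space `X`, invariant measures, dynamical comparison,
topological full groups, and the topology on spaces of actions. -/

/-- The group of self-homeomorphisms of `X`, with `(g * h) x = g (h x)`. -/
instance homeoGroup (X : Type*) [TopologicalSpace X] : Group (X ≃ₜ X) where
  mul g h := h.trans g
  one := Homeomorph.refl X
  inv := Homeomorph.symm
  mul_assoc a b c := Homeomorph.ext fun _ => rfl
  one_mul a := Homeomorph.ext fun _ => rfl
  mul_one a := Homeomorph.ext fun _ => rfl
  inv_mul_cancel a := Homeomorph.ext fun x => a.symm_apply_apply x

/-- The Cantor space `{0,1}^ℕ`. -/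
abbrev Cantor : Type := ℕ → Bool

section Defs

variable {Γ : Type*} [Group Γ] {X : Type*} [TopologicalSpace X]

/-- A left-invariant finitely additive probability measure on (the power set of) `Γ`,
with values in `[0,1]`. `Γ` is amenable iff such a measure exists. -/
def IsInvFapm {Γ : Type*} [Group Γ] (m : Set Γ → ℝ) : Prop :=
  (∀ E : Set Γ, 0 ≤ m E) ∧ (∀ E : Set Γ, m E ≤ 1) ∧ m Set.univ = 1 ∧
  (∀ E F : Set Γ, Disjoint E F → m (E ∪ F) = m E + m F) ∧
  (∀ (γ : Γ) (E : Set Γ), m ((γ * ·) '' E) = m E)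

/-- The action of `γ ∈ Γ` on continuous `ℕ`-valued functions: `(γ · f)(x) = f(γ⁻¹ · x)`. -/
def actC (α : Γ →* X ≃ₜ X) (γ : Γ) (f : C(X, ℕ)) : C(X, ℕ) :=
  f.comp (α γ⁻¹)

/-- The equidecomposability relation `∼` on `C(X, ℕ)`: `f ∼ g` iff `f = h₁ + ⋯ + hₙ`
and `g = γ₁·h₁ + ⋯ + γₙ·hₙ` for some `hᵢ ∈ C(X,ℕ)`, `γᵢ ∈ Γ`. -/
def TypeRel (α : Γ →* X ≃ₜ X) (f g : C(X, ℕ)) : Prop :=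
  ∃ (n : ℕ) (h : Fin n → C(X, ℕ)) (γ : Fin n → Γ),
    f = ∑ i, h i ∧ g = ∑ i, actC α (γ i) (h i)

/-- The additive congruence on `C(X, ℕ)` generated by `∼` (since `∼` is itself an
additive congruence, this is just `∼`). -/
def typeCon (α : Γ →* X ≃ₜ X) : AddCon C(X, ℕ) := addConGen (TypeRel α)

/-- The clopen type semigroup `T(α) = C(X,ℕ)/∼`. -/
abbrev TypeSemigroup (α : Γ →* X ≃ₜ X) := (typeCon α).Quotient

/-- The class `[f] ∈ T(α)` of `f ∈ C(X, ℕ)`. -/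
def cls (α : Γ →* X ≃ₜ X) (f : C(X, ℕ)) : TypeSemigroup α := (typeCon α).toQuotient f

/-- The algebraic preorder on `T(α)`: `a ≤ b` iff `a + c = b` for some `c`. -/
def tle (α : Γ →* X ≃ₜ X) (a b : TypeSemigroup α) : Prop := ∃ c, a + c = b

/-- `T(α)` is unperforated: `n • a ≤ n • b` implies `a ≤ b` for all `n ≥ 1`. -/
def IsUnperforated (α : Γ →* X ≃ₜ X) : Prop :=
  ∀ (a b : TypeSemigroup α) (n : ℕ), 1 ≤ n → tle α (n • a) (n • b) → tle α a b

/-- `T(α)` is almost unperforated: `(n+1) • a ≤ n • b` implies `a ≤ b`. -/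
def IsAlmostUnperforated (α : Γ →* X ≃ₜ X) : Prop :=
  ∀ (a b : TypeSemigroup α) (n : ℕ), tle α ((n + 1) • a) (n • b) → tle α a b

/-- `T(α)` is cancellative: `a + b = a + c` implies `b = c`. -/
def IsCancellative (α : Γ →* X ≃ₜ X) : Prop :=
  ∀ a b c : TypeSemigroup α, a + b = a + c → b = c

/-- The algebraic preorder on `T(α)` is a partial order, i.e. it is antisymmetric. -/
def TleAntisymm (α : Γ →* X ≃ₜ X) : Prop :=
  ∀ a b : TypeSemigroup α, tle α a b → tle α b a → a = b

/-- `b` is an order unit of `T(α)`: every `a` satisfies `a ≤ k • b` for some `k ∈ ℕ`. -/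
def IsOrderUnit (α : Γ →* X ≃ₜ X) (b : TypeSemigroup α) : Prop :=
  ∀ a : TypeSemigroup α, ∃ k : ℕ, tle α a (k • b)

/-- A state on `T(α)`: an additive map to `[0,∞]` sending `0` to `0`. -/
def IsState (α : Γ →* X ≃ₜ X) (ν : TypeSemigroup α → ℝ≥0∞) : Prop :=
  ν 0 = 0 ∧ ∀ a b : TypeSemigroup α, ν (a + b) = ν a + ν b

/-- `M(α)`: the set of `Γ`-invariant Radon (regular Borel) probability measures on `X`. -/
def invRadon (α : Γ →* X ≃ₜ X) : Set (@Measure X (borel X)) :=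
  letI : MeasurableSpace X := borel X
  {μ : Measure X | IsProbabilityMeasure μ ∧ μ.Regular ∧ ∀ γ : Γ, Measure.map ⇑(α γ) μ = μ}

/-- The set of `Γ`-invariant Borel probability measures on `X`. -/
def invBorel (α : Γ →* X ≃ₜ X) : Set (@Measure X (borel X)) :=
  letI : MeasurableSpace X := borel X
  {μ : Measure X | IsProbabilityMeasure μ ∧ ∀ γ : Γ, Measure.map ⇑(α γ) μ = μ}

/-- `μ([f]) = ∫ f dμ`, the value of (the state associated with) a measure on the class of
`f ∈ C(X, ℕ)`. -/
noncomputable def intOf {X : Type*} [TopologicalSpace X] (μ : @Measure X (borel X))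
    (f : C(X, ℕ)) : ℝ :=
  letI : MeasurableSpace X := borel X
  ∫ x, (f x : ℝ) ∂μ

/-- `A` is subequidecomposable to `B`: there are a partition `A = A₁ ⊔ ⋯ ⊔ Aₙ` into clopen
sets and `γ₁, …, γₙ ∈ Γ` with `γ₁A₁, …, γₙAₙ` pairwise disjoint and contained in `B`. -/
def Subequidecomposable (α : Γ →* X ≃ₜ X) (A B : Set X) : Prop :=
  ∃ (n : ℕ) (P : Fin n → Set X) (γ : Fin n → Γ),
    (∀ i, IsClopen (P i)) ∧ (Pairwise fun i j => Disjoint (P i) (P j)) ∧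
    (⋃ i, P i) = A ∧
    (Pairwise fun i j => Disjoint (⇑(α (γ i)) '' P i) (⇑(α (γ j)) '' P j)) ∧
    ∀ i, ⇑(α (γ i)) '' P i ⊆ B

/-- Dynamical comparison (with respect to invariant Radon probability measures): for all
clopen `A`, `B` with `B` nonempty and `μ(A) < μ(B)` for every `μ ∈ M(α)`, `A` is
subequidecomposable to `B`. -/
def DynComparison (α : Γ →* X ≃ₜ X) : Prop :=
  ∀ A B : Set X, IsClopen A → IsClopen B → B.Nonempty →
    (∀ μ ∈ invRadon α, μ A < μ B) → Subequidecomposable α A B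

/-- Dynamical comparison (with respect to invariant Borel probability measures). -/
def DynComparisonBorel (α : Γ →* X ≃ₜ X) : Prop :=
  ∀ A B : Set X, IsClopen A → IsClopen B → B.Nonempty →
    (∀ μ ∈ invBorel α, μ A < μ B) → Subequidecomposable α A B

/-- The action `α` is minimal: the only closed invariant subsets are `∅` and `X`. -/
def IsMinimalAction (α : Γ →* X ≃ₜ X) : Prop :=
  ∀ F : Set X, IsClosed F → (∀ γ : Γ, ⇑(α γ) '' F ⊆ F) → F = ∅ ∨ F = Set.univ

/-- Membership in the topological full group `⟦α⟧`: `g` coincides with elements of the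
action on the pieces of a finite clopen partition of `X`. -/
def InTopFullGroup (α : Γ →* X ≃ₜ X) (g : X ≃ₜ X) : Prop :=
  ∃ (n : ℕ) (P : Fin n → Set X) (γ : Fin n → Γ),
    (∀ i, IsClopen (P i)) ∧ (Pairwise fun i j => Disjoint (P i) (P j)) ∧
    (⋃ i, P i) = Set.univ ∧ ∀ i, ∀ x ∈ P i, g x = α (γ i) x

/-- `⟦α⟧` admits a dense locally finite subgroup: there is a subgroup `Λ` of `Homeo(X)`
contained in `⟦α⟧`, locally finite (all its finitely generated subgroups are finite), and
dense in `⟦α⟧` for the topology whose basic neighborhoods of `h` are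
`{g : g A = h A for all A ∈ 𝒜}`, `𝒜` ranging over finite clopen partitions of `X`. -/
def HasDenseLocallyFiniteSubgroup (α : Γ →* X ≃ₜ X) : Prop :=
  ∃ Λ : Subgroup (X ≃ₜ X),
    ((Λ : Set (X ≃ₜ X)) ⊆ {g | InTopFullGroup α g}) ∧
    (∀ s : Finset (X ≃ₜ X), (s : Set (X ≃ₜ X)) ⊆ (Λ : Set (X ≃ₜ X)) →
      ((Subgroup.closure (s : Set (X ≃ₜ X)) : Subgroup (X ≃ₜ X)) : Set (X ≃ₜ X)).Finite) ∧
    ∀ g : X ≃ₜ X, InTopFullGroup α g →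
      ∀ (n : ℕ) (P : Fin n → Set X), (∀ i, IsClopen (P i)) →
        (Pairwise fun i j => Disjoint (P i) (P j)) → (⋃ i, P i) = Set.univ →
        ∃ l ∈ Λ, ∀ i, ⇑l '' P i = ⇑g '' P i

end Defs

/-- The topology on `Homeo(X)` whose basic neighborhoods of `h` are the sets
`{g : g A = h A for all A ∈ 𝒜}`, for `𝒜` a finite clopen partition of `X`; equivalently,
the topology generated by the sets `{g : g '' A = B}` for `A`, `B` clopen. -/
def homeoTop (X : Type*) [TopologicalSpace X] : TopologicalSpace (X ≃ₜ X) :=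
  TopologicalSpace.generateFrom
    {U | ∃ A B : Set X, IsClopen A ∧ IsClopen B ∧ U = {g : X ≃ₜ X | ⇑g '' A = B}}

/-- The topology on the space `A(Γ)` of actions of `Γ` on `X`, induced from the product
topology on `Homeo(X)^Γ`. -/
def actionTop (Γ : Type*) [Group Γ] (X : Type*) [TopologicalSpace X] :
    TopologicalSpace (Γ →* (X ≃ₜ X)) :=
  letI := homeoTop X
  TopologicalSpace.induced (fun φ : Γ →* (X ≃ₜ X) => ⇑φ) Pi.topologicalSpace

section Homology

variable {Γ : Type*} [Group Γ] {X : Type*} [TopologicalSpace X]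

/-- The action of `γ ∈ Γ` on continuous `ℤ`-valued functions: `(γ · f)(x) = f(γ⁻¹ · x)`. -/
def actZ (α : Γ →* X ≃ₜ X) (γ : Γ) (f : C(X, ℤ)) : C(X, ℤ) :=
  f.comp (α γ⁻¹)

/-- The subgroup of `C(X, ℤ)` generated by `{f - γ·f : f ∈ C(X,ℤ), γ ∈ Γ}`. -/
def coinvKer (α : Γ →* X ≃ₜ X) : AddSubgroup C(X, ℤ) :=
  AddSubgroup.closure {g : C(X, ℤ) | ∃ (f : C(X, ℤ)) (γ : Γ), g = f - actZ α γ f}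

/-- The `0`-homology group (group of coinvariants) `H(α)`. -/
abbrev HGroup (α : Γ →* X ≃ₜ X) := C(X, ℤ) ⧸ coinvKer α

/-- The canonical inclusion `C(X, ℕ) → C(X, ℤ)`. -/
def natToZ {X : Type*} [TopologicalSpace X] (f : C(X, ℕ)) : C(X, ℤ) :=
  ⟨fun x => (f x : ℤ),
    (continuous_of_discreteTopology (f := fun n : ℕ => (n : ℤ))).comp f.continuous⟩

end Homology

/-! Since `H(α)` is a group, injectivity of the additive map `π` forces cancellation.
Conversely, writing `f = f⁺ - f⁻`, each generator `f - γ·f` of `coinvKer α` equals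
`(f⁺ + γ·f⁻) - (f⁻ + γ·f⁺)`, a difference of two equivalent elements of `C(X, ℕ)`, and hence
so is every element of `coinvKer α`. If `π[f] = π[g]` this gives `f + u = g + v` with
`[u] = [v]`, and cancelling `[u]` yields `[f] = [g]`. -/

section TypeSemigroupToHGroup

variable {Γ : Type*} [Group Γ] {X : Type*} [TopologicalSpace X]

lemma natToZ_add (f g : C(X, ℕ)) : natToZ (f + g) = natToZ f + natToZ g := by
  ext x; simp [natToZ]

lemma natToZ_injective : Function.Injective (natToZ (X := X)) := fun f g h =>
  ContinuousMap.ext fun x => Nat.cast_injective (ContinuousMap.congr_fun h x : (f x : ℤ) = g x)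

def toNatPart (f : C(X, ℤ)) : C(X, ℕ) :=
  ⟨fun x => (f x).toNat, (continuous_of_discreteTopology (f := Int.toNat)).comp f.continuous⟩

lemma sub_actZ_eq_natToZ_sub (α : Γ →* X ≃ₜ X) (γ : Γ) (f : C(X, ℤ)) :
    f - actZ α γ f =
      natToZ (toNatPart f + actC α γ (toNatPart (-f))) -
        natToZ (toNatPart (-f) + actC α γ (toNatPart f)) := by
  ext x
  simp only [ContinuousMap.sub_apply, natToZ_add, ContinuousMap.add_apply]
  simp only [natToZ, toNatPart, actZ, actC, ContinuousMap.coe_mk, ContinuousMap.comp_apply,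
    ContinuousMap.neg_apply]
  omega

lemma cls_add (α : Γ →* X ≃ₜ X) (f g : C(X, ℕ)) :
    cls α (f + g) = cls α f + cls α g := rfl

lemma cls_surjective (α : Γ →* X ≃ₜ X) : Function.Surjective (cls α) :=
  Quot.mk_surjective

lemma cls_actC (α : Γ →* X ≃ₜ X) (γ : Γ) (f : C(X, ℕ)) :
    cls α (actC α γ f) = cls α f :=
  ((AddCon.eq _).2 <| AddConGen.Rel.of _ _ ⟨1, fun _ => f, fun _ => γ, by simp, by simp⟩).symm

lemma exists_cls_eq_of_mem_coinvKer (α : Γ →* X ≃ₜ X) {w : C(X, ℤ)} (hw : w ∈ coinvKer α) :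
    ∃ u v : C(X, ℕ), cls α u = cls α v ∧ w = natToZ u - natToZ v := by
  induction hw using AddSubgroup.closure_induction with
  | mem w hw =>
    obtain ⟨f, γ, rfl⟩ := hw
    refine ⟨_, _, ?_, sub_actZ_eq_natToZ_sub α γ f⟩
    rw [cls_add, cls_add, cls_actC, cls_actC, add_comm]
  | zero => exact ⟨0, 0, rfl, by simp⟩
  | add w₁ w₂ _ _ ih₁ ih₂ =>
    obtain ⟨u₁, v₁, h₁, rfl⟩ := ih₁
    obtain ⟨u₂, v₂, h₂, rfl⟩ := ih₂
    refine ⟨u₁ + u₂, v₁ + v₂, by rw [cls_add, cls_add, h₁, h₂], ?_⟩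
    rw [natToZ_add, natToZ_add]; abel
  | neg w _ ih =>
    obtain ⟨u, v, h, rfl⟩ := ih
    exact ⟨v, u, h.symm, by abel⟩

lemma cls_eq_of_mk_natToZ_eq {α : Γ →* X ≃ₜ X} (hc : IsCancellative α) {f g : C(X, ℕ)}
    (h : (QuotientAddGroup.mk (natToZ f) : HGroup α) = QuotientAddGroup.mk (natToZ g)) :
    cls α f = cls α g := by
  obtain ⟨u, v, huv, hw⟩ := exists_cls_eq_of_mem_coinvKer α (QuotientAddGroup.eq.1 h)
  have hsum : f + u = g + v := natToZ_injective <| by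
    rw [natToZ_add, natToZ_add]; linear_combination -hw
  apply hc (cls α v)
  calc cls α v + cls α f = cls α (f + u) := by rw [cls_add, huv, add_comm]
    _ = cls α (g + v) := by rw [hsum]
    _ = cls α v + cls α g := by rw [cls_add, add_comm]

lemma map_add_of_map_cls {α : Γ →* X ≃ₜ X} (π : TypeSemigroup α → HGroup α)
    (hπ : ∀ f : C(X, ℕ), π (cls α f) = QuotientAddGroup.mk (natToZ f))
    (a b : TypeSemigroup α) : π (a + b) = π a + π b := by
  obtain ⟨f, rfl⟩ := cls_surjective α a
  obtain ⟨g, rfl⟩ := cls_surjective α b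
  rw [← cls_add, hπ, hπ, hπ, natToZ_add, QuotientAddGroup.mk_add]

end TypeSemigroupToHGroup

theorem stmt13_general {Γ : Type*} [Group Γ]
    {X : Type*} [TopologicalSpace X]
    (α : Γ →* (X ≃ₜ X))
    (π : TypeSemigroup α → HGroup α)
    (hπ : ∀ f : C(X, ℕ), π (cls α f) = QuotientAddGroup.mk (natToZ f)) :
    Function.Injective π ↔ IsCancellative α := by
  constructor
  · intro hinj
    exact (hinj.isLeftCancelAdd π (map_add_of_map_cls π hπ)).add_left_cancel
  · intro hc a b hab
    obtain ⟨f, rfl⟩ := cls_surjective α a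
    obtain ⟨g, rfl⟩ := cls_surjective α b
    rw [hπ, hπ] at hab
    exact cls_eq_of_mk_natToZ_eq hc hab

/-- Let `π : T(α) → H(α)` be the natural map sending the class `[f]` of
`f ∈ C(X, ℕ)` in `T(α)` to the class of `f` in `H(α)`. Then `π` is injective iff `T(α)` is
cancellative. -/
theorem stmt13 {Γ : Type*} [Group Γ] [Countable Γ]
    {X : Type*} [TopologicalSpace X] [CompactSpace X] [T2Space X]
    [TotallyDisconnectedSpace X]
    (α : Γ →* (X ≃ₜ X))
    (π : TypeSemigroup α → HGroup α)
    (hπ : ∀ f : C(X, ℕ), π (cls α f) = QuotientAddGroup.mk (natToZ f)) :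
    Function.Injective π ↔ IsCancellative α :=
  stmt13_general α π hπ
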